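/- If (Y, Z) is centered bivariate normal with standard deviations σ_y, σ_z > 0 and correlation ξ with |ξ| < 1, and f denotes its density, then ∫₀^∞ ∫_{-∞}^0 2z f(y,z) dy dz = (1-ξ)σ_z/√(2π), where the inner integral is over y ∈ (-∞, 0) and the outer over z ∈ (0, ∞). -/

import Mathlib

/-!
Write `φ x = exp (-x²/2)`, `G t = ∫_t^∞ φ`, `a = √(1 - ξ²)` and `c = ξ / a`. Completing the square
in `y` factors the density as `φ(z/σz) φ((y - σy ξ z/σz)/(σy a)) / (2π a σy σz)`, so the inner
integral over `y < 0` is the Gaussian tail `σy a G(c z/σz)`. After `z = σz v` it remains to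
compute `∫_0^∞ v φ(v) G(cv) dv`. Since `(φ(v) G(cv))' = -v φ(v) G(cv) - c φ(v) φ(cv)` and
`φ(v) φ(cv)` is again a Gaussian, integrating by parts gives
`√(2π)/2 · (1 - c/√(1 + c²)) = √(2π)(1 - ξ)/2`.
-/

open Real

/-- Centered bivariate normal density with standard deviations `σy, σz` and correlation `ξ`. -/
noncomputable def bvnDensity (σy σz ξ y z : ℝ) : ℝ :=
  (1 / (2 * π * Real.sqrt (1 - ξ ^ 2) * σy * σz)) *
    Real.exp (-(1 / (2 * (1 - ξ ^ 2))) *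
      (y ^ 2 / σy ^ 2 - 2 * ξ * y * z / (σy * σz) + z ^ 2 / σz ^ 2))

open MeasureTheory Set Filter Topology

noncomputable def gaussKernel (x : ℝ) : ℝ := exp (-(1 / 2) * x ^ 2)

noncomputable def gaussTail (t : ℝ) : ℝ := ∫ u in Ioi t, gaussKernel u

@[fun_prop]
lemma continuous_gaussKernel : Continuous gaussKernel := by unfold gaussKernel; fun_prop

lemma gaussKernel_pos (x : ℝ) : 0 < gaussKernel x := exp_pos _

lemma integrable_gaussKernel : Integrable gaussKernel :=
  integrable_exp_neg_mul_sq one_half_pos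

lemma integral_gaussKernel : ∫ x, gaussKernel x = √(2 * π) := by
  unfold gaussKernel
  rw [integral_gaussian]
  congr 1
  ring

lemma hasDerivAt_gaussKernel (x : ℝ) : HasDerivAt gaussKernel (-x * gaussKernel x) x := by
  have h := ((hasDerivAt_pow 2 x).const_mul (-(1 / 2) : ℝ)).exp
  unfold gaussKernel
  convert h using 1
  push_cast
  ring

lemma tendsto_gaussKernel_atTop : Tendsto gaussKernel atTop (𝓝 0) := by
  refine tendsto_exp_atBot.comp ?_
  exact tendsto_neg_atTop_atBot.comp ((tendsto_pow_atTop two_ne_zero).const_mul_atTop one_half_pos)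
    |>.congr fun x => by simp only [Function.comp, neg_mul]

lemma gaussKernel_mul_gaussKernel_mul (c v : ℝ) :
    gaussKernel v * gaussKernel (c * v) = exp (-((1 + c ^ 2) / 2) * v ^ 2) := by
  rw [gaussKernel, gaussKernel, ← exp_add]
  ring_nf

lemma gaussTail_zero : gaussTail 0 = √(2 * π) / 2 := by
  unfold gaussTail gaussKernel
  rw [integral_gaussian_Ioi]
  congr 2
  ring

lemma gaussTail_nonneg (t : ℝ) : 0 ≤ gaussTail t :=
  setIntegral_nonneg measurableSet_Ioi fun x _ => (gaussKernel_pos x).le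

lemma gaussTail_le (t : ℝ) : gaussTail t ≤ √(2 * π) :=
  integral_gaussKernel ▸
    setIntegral_le_integral integrable_gaussKernel (.of_forall fun x => (gaussKernel_pos x).le)

lemma gaussTail_eq_sub_intervalIntegral (t : ℝ) :
    gaussTail t = gaussTail 0 - ∫ u in (0 : ℝ)..t, gaussKernel u := by
  have hI {s : Set ℝ} : IntegrableOn gaussKernel s := integrable_gaussKernel.integrableOn
  have h0 := intervalIntegral.integral_Iic_add_Ioi (b := 0) hI hI
  have ht := intervalIntegral.integral_Iic_add_Ioi (b := t) hI hI
  rw [gaussTail, gaussTail, ← intervalIntegral.integral_Iic_sub_Iic hI hI]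
  linarith

lemma hasDerivAt_gaussTail (t : ℝ) : HasDerivAt gaussTail (-gaussKernel t) t := by
  have h := intervalIntegral.integral_hasDerivAt_right (a := 0)
    integrable_gaussKernel.intervalIntegrable
    (continuous_gaussKernel.stronglyMeasurableAtFilter _ _)
    (continuous_gaussKernel.continuousAt (x := t))
  rw [funext gaussTail_eq_sub_intervalIntegral]
  exact h.const_sub _

@[fun_prop]
lemma continuous_gaussTail : Continuous gaussTail :=
  continuous_iff_continuousAt.2 fun t => (hasDerivAt_gaussTail t).continuousAt

lemma integral_Ioi_comp_add_right {E : Type*} [NormedAddCommGroup E] [NormedSpace ℝ E]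
    (f : ℝ → E) (a t : ℝ) : ∫ x in Ioi a, f (x + t) = ∫ x in Ioi (a + t), f x := by
  have h := (measurableEmbedding_addRight t).setIntegral_map (μ := volume) f (Ioi (a + t))
  rw [map_add_right_eq_self volume t] at h
  rw [h, preimage_add_const_Ioi, add_sub_cancel_right]

lemma integral_Iio_gaussKernel_sub_div (μ : ℝ) {s : ℝ} (hs : 0 < s) :
    ∫ y in Iio (0 : ℝ), gaussKernel ((y - μ) / s) = s * gaussTail (μ / s) := by
  have hsymm : ∀ y, gaussKernel ((y - μ) / s) = gaussKernel (s⁻¹ * -y + μ / s) := fun y => by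
    simp only [gaussKernel]
    ring_nf
  simp_rw [← integral_Iic_eq_integral_Iio, hsymm]
  rw [integral_comp_neg_Iic 0 (fun x => gaussKernel (s⁻¹ * x + μ / s)), neg_zero,
    integral_comp_mul_left_Ioi (fun x => gaussKernel (x + μ / s)) 0 (inv_pos.2 hs),
    mul_zero, inv_inv, integral_Ioi_comp_add_right, zero_add, smul_eq_mul, gaussTail]

lemma integral_mul_gaussKernel_mul_gaussTail (c : ℝ) :
    ∫ v in Ioi (0 : ℝ), v * gaussKernel v * gaussTail (c * v) =
      √(2 * π) / 2 * (1 - c / √(1 + c ^ 2)) := by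
  set F : ℝ → ℝ := fun v => -(gaussKernel v * gaussTail (c * v))
  have hF : ∀ v, HasDerivAt F
      (v * gaussKernel v * gaussTail (c * v) + c * (gaussKernel v * gaussKernel (c * v))) v := by
    intro v
    have hc := (hasDerivAt_gaussTail (c * v)).comp v ((hasDerivAt_id v).const_mul c)
    refine ((hasDerivAt_gaussKernel v).mul hc).neg.congr_deriv ?_
    simp only [Function.comp_apply]
    ring
  have hF0 : F 0 = -(√(2 * π) / 2) := by
    simp [F, gaussTail_zero, gaussKernel]
  have hbound : ∀ v, ‖gaussKernel v * gaussTail (c * v)‖ ≤ √(2 * π) * gaussKernel v := fun v => by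
    rw [Real.norm_of_nonneg (mul_nonneg (gaussKernel_pos v).le (gaussTail_nonneg _)),
      mul_comm (√_)]
    exact mul_le_mul_of_nonneg_left (gaussTail_le _) (gaussKernel_pos v).le
  have hlim : Tendsto F atTop (𝓝 0) := by
    refine squeeze_zero_norm (fun v => (norm_neg _).le.trans (hbound v)) ?_
    simpa using tendsto_gaussKernel_atTop.const_mul (√(2 * π))
  have hint₁ : IntegrableOn (fun v => v * gaussKernel v * gaussTail (c * v)) (Ioi 0) := by
    refine Integrable.mono' ((integrable_mul_exp_neg_mul_sq one_half_pos).integrableOn.const_mul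
      (√(2 * π))) (by fun_prop : Continuous _).aestronglyMeasurable ?_
    rw [ae_restrict_iff' measurableSet_Ioi]
    refine .of_forall fun v (hv : 0 < v) => ?_
    rw [mul_assoc, norm_mul, Real.norm_of_nonneg hv.le, mul_left_comm]
    exact mul_le_mul_of_nonneg_left (hbound v) hv.le
  have hint₂ : IntegrableOn (fun v => c * (gaussKernel v * gaussKernel (c * v))) (Ioi 0) := by
    simp_rw [gaussKernel_mul_gaussKernel_mul]
    exact ((integrable_exp_neg_mul_sq (by positivity)).const_mul c).integrableOn
  have hgauss : ∫ v in Ioi (0 : ℝ), c * (gaussKernel v * gaussKernel (c * v)) =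
      c * (√(2 * π) / √(1 + c ^ 2) / 2) := by
    simp_rw [gaussKernel_mul_gaussKernel_mul]
    rw [integral_const_mul, integral_gaussian_Ioi, div_div_eq_mul_div, sqrt_div' _ (by positivity),
      mul_comm π]
  have key := integral_Ioi_of_hasDerivAt_of_tendsto' (fun v _ => hF v) (hint₁.add hint₂) hlim
  rw [integral_add hint₁ hint₂, hgauss, hF0] at key
  linear_combination key

lemma bvnDensity_eq {σy σz ξ : ℝ} (hσy : σy ≠ 0) (hσz : σz ≠ 0) (hξ : ξ ^ 2 < 1) (y z : ℝ) :
    bvnDensity σy σz ξ y z = gaussKernel (z / σz) *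
      gaussKernel ((y - σy * ξ * z / σz) / (σy * √(1 - ξ ^ 2))) /
        (2 * π * √(1 - ξ ^ 2) * σy * σz) := by
  have ha : √(1 - ξ ^ 2) ^ 2 = 1 - ξ ^ 2 := sq_sqrt (by linarith)
  have h₁ : 1 - ξ ^ 2 ≠ 0 := by linarith
  rw [bvnDensity, gaussKernel, gaussKernel, ← exp_add, one_div_mul_eq_div]
  congr 2
  simp only [div_pow, mul_pow, ha]
  field_simp
  ring

lemma integral_Iio_bvnDensity {σy σz ξ : ℝ} (hσy : 0 < σy) (hσz : 0 < σz) (hξ : ξ ^ 2 < 1)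
    (z : ℝ) : ∫ y in Iio (0 : ℝ), bvnDensity σy σz ξ y z =
      gaussKernel (z / σz) * gaussTail (ξ / √(1 - ξ ^ 2) * (z / σz)) / (2 * π * σz) := by
  have ha : 0 < √(1 - ξ ^ 2) := sqrt_pos.2 (by linarith)
  simp_rw [bvnDensity_eq hσy.ne' hσz.ne' hξ]
  rw [integral_div, integral_const_mul,
    integral_Iio_gaussKernel_sub_div _ (mul_pos hσy ha)]
  field_simp

lemma div_sqrt_one_sub_sq_div_sqrt_one_add_sq {ξ : ℝ} (hξ : ξ ^ 2 < 1) :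
    ξ / √(1 - ξ ^ 2) / √(1 + (ξ / √(1 - ξ ^ 2)) ^ 2) = ξ := by
  have h₁ : 1 - ξ ^ 2 ≠ 0 := by linarith
  have ha : 0 < √(1 - ξ ^ 2) := sqrt_pos.2 (by linarith)
  have h : 1 + (ξ / √(1 - ξ ^ 2)) ^ 2 = (√(1 - ξ ^ 2))⁻¹ ^ 2 := by
    rw [div_pow, inv_pow, sq_sqrt (by linarith)]
    field_simp
    ring
  rw [h, sqrt_sq (by positivity), div_inv_eq_mul, div_mul_cancel₀ _ ha.ne']

theorem stmt10 (σy σz ξ : ℝ) (hσy : 0 < σy) (hσz : 0 < σz) (hξ : |ξ| < 1) :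
    (∫ z in Set.Ioi (0 : ℝ), ∫ y in Set.Iio (0 : ℝ), 2 * z * bvnDensity σy σz ξ y z) =
      (1 - ξ) * σz / Real.sqrt (2 * π) := by
  have hξ₂ : ξ ^ 2 < 1 := (sq_lt_one_iff_abs_lt_one ξ).2 hξ
  calc (∫ z in Ioi (0 : ℝ), ∫ y in Iio (0 : ℝ), 2 * z * bvnDensity σy σz ξ y z)
      = ∫ z in Ioi (0 : ℝ), π⁻¹ * (σz⁻¹ * z * gaussKernel (σz⁻¹ * z) *
          gaussTail (ξ / √(1 - ξ ^ 2) * (σz⁻¹ * z))) := by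
        refine setIntegral_congr_fun measurableSet_Ioi fun z _ => ?_
        rw [integral_const_mul, integral_Iio_bvnDensity hσy hσz hξ₂, inv_mul_eq_div]
        field_simp
    _ = σz / π * ∫ v in Ioi (0 : ℝ), v * gaussKernel v * gaussTail (ξ / √(1 - ξ ^ 2) * v) := by
        rw [integral_comp_mul_left_Ioi (fun v => π⁻¹ * (v * gaussKernel v *
          gaussTail (ξ / √(1 - ξ ^ 2) * v))) 0 (inv_pos.2 hσz), integral_const_mul, mul_zero,
          inv_inv, smul_eq_mul]
        ring
    _ = (1 - ξ) * σz / √(2 * π) := by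
        rw [integral_mul_gaussKernel_mul_gaussTail,
          div_sqrt_one_sub_sq_div_sqrt_one_add_sq hξ₂]
        field_simp
        rw [sq_sqrt (by positivity)]
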